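/- Combined bound of Theorem 1 (deterministic part): under the hypotheses of Cases (I) and (II), the selected configuration ĉ satisfies L_{k*}(ĉ) ≤ (1+κ) L_avg(c*_{k*}) if L_{k*}(ĉ) ≤ L_avg(ĉ), and L_{k*}(ĉ) ≤ L_worst(c*_{k*}) otherwise. -/

import Mathlib

/-!
The choice of κ is exactly what puts `c*_{k*}` into `C*`. If `L_{k*}(ĉ) ≤ L_avg(ĉ)`, chain
`L_avg(ĉ) ≤ (1+κ) L*_avg ≤ (1+κ) L_avg(c*_{k*})`; otherwise use `L_{k*} ≤ L_worst` and the
minimality of `ĉ` against `c*_{k*} ∈ C*`.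
-/

theorem le_one_add_mul_of_div_sub_one_le {a m κ : ℝ} (hm : 0 < m) (h : a / m - 1 ≤ κ) :
    a ≤ (1 + κ) * m :=
  (div_le_iff₀ hm).mp (by linarith)

theorem one_add_mul_le_of_div_sub_one_le {a m κ : ℝ} (hm : 0 < m) (hma : m ≤ a)
    (h : a / m - 1 ≤ κ) : (1 + κ) * m ≤ (1 + κ) * a := by
  have hκ : 0 ≤ 1 + κ := by
    have := (one_le_div hm).mpr hma
    linarith
  exact mul_le_mul_of_nonneg_left hma hκ

theorem hypertime_combined_bound_general {C : Type*} (K : ℕ) (hK : 1 ≤ K) (L : Fin K → C → ℝ)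
    (kstar : Fin K)
    (Lavg : C → ℝ)
    (Lworst : C → ℝ)
    (hLworst : ∀ c, Lworst c =
      Finset.univ.sup' ⟨⟨0, hK⟩, Finset.mem_univ _⟩ (fun k => L k c))
    (Lstar : ℝ) (hstar : IsGLB (Set.range Lavg) Lstar) (hstarpos : 0 < Lstar)
    (κ : ℝ) (cstar : C) (hκ : Lavg cstar / Lstar - 1 ≤ κ)
    (Cstar : Set C) (hCstar : Cstar = {c : C | Lavg c ≤ (1 + κ) * Lstar})
    (chat : C) (hchat : chat ∈ Cstar)
    (hmin : ∀ c ∈ Cstar, Lworst chat ≤ Lworst c) :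
    (L kstar chat ≤ Lavg chat → L kstar chat ≤ (1 + κ) * Lavg cstar) ∧
    (¬ (L kstar chat ≤ Lavg chat) → L kstar chat ≤ Lworst cstar) := by
  subst hCstar
  have hcstar : Lavg cstar ≤ (1 + κ) * Lstar := le_one_add_mul_of_div_sub_one_le hstarpos hκ
  refine ⟨fun h => ?_, fun _ => ?_⟩
  · calc L kstar chat ≤ Lavg chat := h
      _ ≤ (1 + κ) * Lstar := hchat
      _ ≤ (1 + κ) * Lavg cstar :=
        one_add_mul_le_of_div_sub_one_le hstarpos (hstar.1 ⟨cstar, rfl⟩) hκ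
  · calc L kstar chat ≤ Lworst chat :=
        (hLworst chat).symm ▸ Finset.le_sup' (fun k => L k chat) (Finset.mem_univ kstar)
      _ ≤ Lworst cstar := hmin cstar hcstar

theorem hypertime_combined_bound {C : Type*} (K : ℕ) (hK : 1 ≤ K) (L : Fin K → C → ℝ)
    (hpos : ∀ k c, 0 ≤ L k c) (kstar : Fin K)
    (Lavg : C → ℝ) (hLavg : ∀ c, Lavg c = (∑ k : Fin K, L k c) / K)
    (Lworst : C → ℝ)
    (hLworst : ∀ c, Lworst c =
      Finset.univ.sup' ⟨⟨0, hK⟩, Finset.mem_univ _⟩ (fun k => L k c))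
    (Lstar : ℝ) (hstar : IsGLB (Set.range Lavg) Lstar) (hstarpos : 0 < Lstar)
    (κ : ℝ) (cstar : C) (hκ : Lavg cstar / Lstar - 1 ≤ κ)
    (Cstar : Set C) (hCstar : Cstar = {c : C | Lavg c ≤ (1 + κ) * Lstar})
    (chat : C) (hchat : chat ∈ Cstar)
    (hmin : ∀ c ∈ Cstar, Lworst chat ≤ Lworst c) :
    (L kstar chat ≤ Lavg chat → L kstar chat ≤ (1 + κ) * Lavg cstar) ∧
    (¬ (L kstar chat ≤ Lavg chat) → L kstar chat ≤ Lworst cstar) :=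
  hypertime_combined_bound_general K hK L kstar Lavg Lworst hLworst Lstar hstar hstarpos κ cstar hκ
    Cstar hCstar chat hchat hmin
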